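/- arXiv:2512.21140 — 2 statements merged into one kernel-verified Lean document; each statement's English description precedes it below -/
import Mathlib

section
/- If the ideal I has a basis of size κ, then every I-open subset of ν^κ is a union of κ-many I-clopen sets; in particular every I-open set belongs to Σ⁰_2 of the I-topology, and the I-Borel hierarchy is increasing (Σ⁰_α(τ_I) ⊆ Σ⁰_β(τ_I) for all 1 ≤ α ≤ β). -/
open Set Cardinal TopologicalSpace

/-- A κ-complete proper ideal on κ extending the ideal of bounded sets. -/
structure IsGoodIdeal (κ : Type) [LinearOrder κ] (I : Set (Set κ)) : Prop where
  lower : ∀ ⦃A B : Set κ⦄, A ⊆ B → B ∈ I → A ∈ I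
  complete : ∀ J : Set (Set κ), J ⊆ I → #J < #κ → ⋃₀ J ∈ I
  proper : (Set.univ : Set κ) ∉ I
  bounded_mem : ∀ s : Set κ, Set.Bounded (· < ·) s → s ∈ I

/-- The basic cone `N_f` determined by the restriction of `f` to `D`. -/
def cone {κ ν : Type} (D : Set κ) (f : κ → ν) : Set (κ → ν) :=
  {x | ∀ α ∈ D, x α = f α}

/-- The ideal topology `τ_I` on `ν^κ`. -/
def idealTop {κ : Type} (I : Set (Set κ)) (ν : Type) : TopologicalSpace (κ → ν) :=
  TopologicalSpace.generateFrom {S | ∃ D ∈ I, ∃ f : κ → ν, S = cone D f}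

/-- The bounded topology `τ_b` on `ν^κ`. -/
def boundedTop (κ ν : Type) [LinearOrder κ] : TopologicalSpace (κ → ν) :=
  TopologicalSpace.generateFrom
    {S | ∃ D : Set κ, Set.Bounded (· < ·) D ∧ ∃ f : κ → ν, S = cone D f}

/-- Membership in the level `Σ⁰_a` of the `c⁺`-Borel hierarchy of `(X, t)`:
`Σ⁰_1` = open sets, and for `a > 1`, `Σ⁰_a` consists of unions of length at most `c`
of sets whose complements lie in `Σ⁰_b` for some `1 ≤ b < a`. -/
inductive SigmaMem {X : Type} (t : TopologicalSpace X) (c : Cardinal) :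
    Ordinal → Set X → Prop
  | base (S : Set X) (h : @IsOpen X t S) : SigmaMem t c 1 S
  | iUnion (a : Ordinal) (ha : 1 < a) (ι : Type) (hι : #ι ≤ c) (f : ι → Set X)
      (b : ι → Ordinal) (hb : ∀ i, 1 ≤ b i ∧ b i < a)
      (hf : ∀ i, SigmaMem t c (b i) (f i)ᶜ) :
      SigmaMem t c a (⋃ i, f i)

/-- The pointclass `Σ⁰_a`. -/
def Sigma0 {X : Type} (t : TopologicalSpace X) (c : Cardinal) (a : Ordinal) : Set (Set X) :=
  {S | SigmaMem t c a S}

/-- The pointclass `Π⁰_a`. -/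
def Pi0 {X : Type} (t : TopologicalSpace X) (c : Cardinal) (a : Ordinal) : Set (Set X) :=
  {S | Sᶜ ∈ Sigma0 t c a}

/-- The pointclass `Δ⁰_a`. -/
def Delta0 {X : Type} (t : TopologicalSpace X) (c : Cardinal) (a : Ordinal) : Set (Set X) :=
  Sigma0 t c a ∩ Pi0 t c a

/-- The `c⁺`-Borel sets: union of the hierarchy along all ordinals `< c⁺`. -/
def BorelSets {X : Type} (t : TopologicalSpace X) (c : Cardinal) : Set (Set X) :=
  {S | ∃ a : Ordinal, a < (Order.succ c).ord ∧ S ∈ Sigma0 t c a}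

-- auxiliary lemmas to insert
lemma cone_mono' {κ ν : Type} {D D' : Set κ} (h : D ⊆ D') (f : κ → ν) :
    cone D' f ⊆ cone D f := fun _ hx α hα => hx α (h hα)

lemma mem_cone_self' {κ ν : Type} (D : Set κ) (f : κ → ν) : f ∈ cone D f := fun _ _ => rfl

lemma cone_of_mem' {κ ν : Type} {D : Set κ} {f x : κ → ν} (hx : x ∈ cone D f) :
    cone D x = cone D f := by
  ext w
  constructor <;> intro hw α hα
  · rw [hw α hα, hx α hα]
  · rw [hw α hα]; exact (hx α hα).symm

lemma cone_isOpen' {κ ν : Type} {I : Set (Set κ)} {D : Set κ} (hD : D ∈ I) (f : κ → ν) :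
    @IsOpen _ (idealTop I ν) (cone D f) :=
  TopologicalSpace.GenerateOpen.basic _ ⟨D, hD, f, rfl⟩

lemma invariant_isOpen' {κ ν : Type} {I : Set (Set κ)} {D : Set κ} (hD : D ∈ I)
    {S : Set (κ → ν)} (hS : ∀ x ∈ S, cone D x ⊆ S) :
    @IsOpen _ (idealTop I ν) S := by
  letI : TopologicalSpace (κ → ν) := idealTop I ν
  have hEq : S = ⋃ x ∈ S, cone D x := by
    ext z
    simp only [Set.mem_iUnion]
    constructor
    · exact fun hz => ⟨z, hz, mem_cone_self' D z⟩
    · rintro ⟨x, hx, hzx⟩; exact hS x hx hzx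
  rw [hEq]
  exact isOpen_iUnion fun x => isOpen_iUnion fun _ => cone_isOpen' hD x

lemma invariant_isClopen' {κ ν : Type} {I : Set (Set κ)} {D : Set κ} (hD : D ∈ I)
    {S : Set (κ → ν)} (hS : ∀ x ∈ S, cone D x ⊆ S) :
    @IsClopen _ (idealTop I ν) S := by
  letI : TopologicalSpace (κ → ν) := idealTop I ν
  refine ⟨⟨invariant_isOpen' hD ?_⟩, invariant_isOpen' hD hS⟩
  intro y hy z hz hzS
  exact hy (hS z hzS (fun α hα => (hz α hα).symm))
lemma sigma_of_clopen_union' {X : Type} {t : TopologicalSpace X} {c : Cardinal}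
    {U : Set X} (κ' : Type) (hκ : #κ' ≤ c) (O : κ' → Set X)
    (hO : ∀ i, @IsClopen X t (O i)) (hU : U = ⋃ i, O i)
    (b : Ordinal) (hb : 1 < b) : SigmaMem t c b U := by
  letI := t
  rw [hU]
  exact SigmaMem.iUnion b hb κ' hκ O (fun _ => 1) (fun _ => ⟨le_rfl, hb⟩)
    (fun i => SigmaMem.base _ (hO i).isClosed.isOpen_compl)

universe uo in
lemma sigmaMem_mono' {X : Type} {t : TopologicalSpace X} {c : Cardinal}
    (hopen : ∀ S : Set X, @IsOpen X t S → ∀ b : Ordinal.{uo}, 1 < b → SigmaMem t c b S)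
    (a b : Ordinal.{uo}) (ha : 1 ≤ a) (hab : a ≤ b) :
    Sigma0 t c a ⊆ Sigma0 t c b := by
  rcases eq_or_lt_of_le hab with rfl | hlt
  · exact Set.Subset.rfl
  have hb : 1 < b := lt_of_le_of_lt ha hlt
  intro S hS
  rcases eq_or_lt_of_le ha with h1 | h1
  · have hSopen : @IsOpen X t S := by
      subst h1
      cases hS with
      | base _ h => exact h
      | iUnion _ ha' _ _ _ _ _ _ => exact absurd ha' (lt_irrefl _)
    exact hopen S hSopen b hb
  · cases hS with
    | base _ h => exact absurd h1 (lt_irrefl _)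
    | iUnion _ _ ι hι f b' hb' hf =>
        exact SigmaMem.iUnion b hb ι hι f b'
          (fun i => ⟨(hb' i).1, (hb' i).2.trans hlt⟩) hf
lemma goodIdeal_empty_mem {κ : Type} [LinearOrder κ] {I : Set (Set κ)}
    (hI : IsGoodIdeal κ I) (hunc : ℵ₀ < #κ) : (∅ : Set κ) ∈ I := by
  have hpos : (0 : Cardinal) < #κ := lt_trans Cardinal.aleph0_pos hunc
  have : Nonempty κ := Cardinal.mk_ne_zero_iff.mp hpos.ne'
  exact hI.bounded_mem ∅ ⟨Classical.arbitrary κ, fun b hb => absurd hb (Set.notMem_empty b)⟩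

lemma goodIdeal_union_mem {κ : Type} [LinearOrder κ] {I : Set (Set κ)}
    (hI : IsGoodIdeal κ I) (hunc : ℵ₀ < #κ) {A B : Set κ} (hA : A ∈ I) (hB : B ∈ I) :
    A ∪ B ∈ I := by
  have h2 : #({A, B} : Set (Set κ)) < #κ :=
    lt_of_lt_of_le (Set.toFinite _).lt_aleph0 hunc.le
  have := hI.complete {A, B} (by rintro X (rfl | rfl) <;> assumption) h2
  simpa [Set.sUnion_pair] using this

lemma open_local' {κ ν : Type} [LinearOrder κ] {I : Set (Set κ)} (hI : IsGoodIdeal κ I)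
    (hunc : ℵ₀ < #κ) {U : Set (κ → ν)} (hU : @IsOpen _ (idealTop I ν) U) :
    ∀ x ∈ U, ∃ D ∈ I, cone D x ⊆ U := by
  have hU' : TopologicalSpace.GenerateOpen {S | ∃ D ∈ I, ∃ f : κ → ν, S = cone D f} U := hU
  clear hU
  induction hU' with
  | basic S hS =>
      rintro x hx
      obtain ⟨D, hD, f, rfl⟩ := hS
      exact ⟨D, hD, fun w hw α hα => (hw α hα).trans (hx α hα)⟩
  | univ =>
      intro x _
      exact ⟨∅, goodIdeal_empty_mem hI hunc, fun _ _ => Set.mem_univ _⟩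
  | inter U V hUo hVo ihU ihV =>
      intro x hx
      obtain ⟨D, hD, hDU⟩ := ihU x hx.1
      obtain ⟨E, hE, hEV⟩ := ihV x hx.2
      exact ⟨D ∪ E, goodIdeal_union_mem hI hunc hD hE,
        fun w hw => ⟨hDU (cone_mono' Set.subset_union_left x hw),
          hEV (cone_mono' Set.subset_union_right x hw)⟩⟩
  | sUnion S hS ih =>
      intro x hx
      obtain ⟨V, hV, hxV⟩ := hx
      obtain ⟨D, hD, h⟩ := ih V hV x hxV
      exact ⟨D, hD, h.trans (Set.subset_sUnion_of_mem hV)⟩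
/-- if `I` has a basis of size `κ`, every `I`-open set is a union of
`κ`-many `I`-clopen sets, hence lies in `Σ⁰_2(τ_I)`, and the `I`-Borel hierarchy is
increasing. -/
theorem stmt_13 (κ ν : Type) [LinearOrder κ]
    (hreg : (#κ).IsRegular) (hunc : ℵ₀ < #κ) (hν : #ν = 2 ∨ #ν = #κ)
    (I : Set (Set κ)) (hI : IsGoodIdeal κ I)
    (hbasis : ∃ B : Set (Set κ), B ⊆ I ∧ #↥B ≤ #κ ∧ ∀ A ∈ I, ∃ D ∈ B, A ⊆ D) :
    (∀ U : Set (κ → ν), @IsOpen _ (idealTop I ν) U →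
      ∃ O : κ → Set (κ → ν), (∀ i, @IsClopen _ (idealTop I ν) (O i)) ∧ U = ⋃ i, O i) ∧
    (∀ U : Set (κ → ν), @IsOpen _ (idealTop I ν) U →
      U ∈ Sigma0 (idealTop I ν) #κ 2) ∧
    (∀ a b : Ordinal, 1 ≤ a → a ≤ b →
      Sigma0 (idealTop I ν) #κ a ⊆ Sigma0 (idealTop I ν) #κ b) := by
  obtain ⟨B, hBI, hBcard, hBbasis⟩ := hbasis
  have hne : B.Nonempty := by
    obtain ⟨E, hE, _⟩ := hBbasis ∅ (goodIdeal_empty_mem hI hunc)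
    exact ⟨E, hE⟩
  have : Nonempty ↥B := hne.to_subtype
  obtain ⟨e⟩ := (Cardinal.le_def _ _).mp hBcard
  set g : κ → ↥B := Function.invFun e with hgdef
  have hg : Function.Surjective g := Function.invFun_surjective e.injective
  set D : κ → Set κ := fun i => ((g i : Set κ)) with hDdef
  have hDI : ∀ i, D i ∈ I := fun i => hBI (g i).2
  have hDbasis : ∀ A ∈ I, ∃ i, A ⊆ D i := by
    intro A hA
    obtain ⟨E, hE, hAE⟩ := hBbasis A hA
    obtain ⟨i, hi⟩ := hg ⟨E, hE⟩
    refine ⟨i, ?_⟩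
    simp only [hDdef, hi]
    exact hAE
  -- the main construction
  have main : ∀ U : Set (κ → ν), @IsOpen _ (idealTop I ν) U →
      ∃ O : κ → Set (κ → ν), (∀ i, @IsClopen _ (idealTop I ν) (O i)) ∧ U = ⋃ i, O i := by
    intro U hU
    refine ⟨fun i => ⋃ x ∈ {x | x ∈ U ∧ cone (D i) x ⊆ U}, cone (D i) x, ?_, ?_⟩
    · intro i
      refine invariant_isClopen' (hDI i) ?_
      intro y hy
      simp only [Set.mem_iUnion] at hy
      obtain ⟨x, hx, hyx⟩ := hy
      intro z hz
      simp only [Set.mem_iUnion]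
      refine ⟨x, hx, ?_⟩
      rw [← cone_of_mem' hyx]
      exact hz
    · apply Set.Subset.antisymm
      · intro x hx
        obtain ⟨D', hD', hcone⟩ := open_local' hI hunc hU x hx
        obtain ⟨i, hi⟩ := hDbasis D' hD'
        have hsub : cone (D i) x ⊆ U := (cone_mono' hi x).trans hcone
        refine Set.mem_iUnion.mpr ⟨i, ?_⟩
        simp only [Set.mem_iUnion]
        exact ⟨x, ⟨hx, hsub⟩, mem_cone_self' _ x⟩
      · intro z hz
        obtain ⟨i, hi⟩ := Set.mem_iUnion.mp hz
        simp only [Set.mem_iUnion] at hi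
        obtain ⟨x, ⟨_, hsub⟩, hzx⟩ := hi
        exact hsub hzx
  refine ⟨main, ?_, ?_⟩
  · intro U hU
    obtain ⟨O, hO, hUO⟩ := main U hU
    exact sigma_of_clopen_union' κ le_rfl O hO hUO 2 (by norm_num)
  · refine fun a b => sigmaMem_mono' (fun S hS b hb => ?_) a b
    obtain ⟨O, hO, hUO⟩ := main S hS
    exact sigma_of_clopen_union' κ le_rfl O hO hUO b hb
end

section
/- Suppose I contains an unbounded subset of κ. Then: (1) every nonempty A ⊆ ν^κ is the image of all of κ^κ under a map continuous with respect to the I-topologies; (2) every A ⊆ ν^κ is the image of some I-closed subset C ⊆ κ^κ under an injective I-continuous map. In particular, continuous images (even injective continuous images of closed sets) give the full powerset. -/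
/-!
Fix an unbounded `U ∈ I`. Since `U` is cofinal and `I` is `κ`-complete, `#U = #κ`, so there is
a bijection `θ : κ^U ≃ ν^κ`. A map of the form `g ∘ U.domRestrict` is `I`-continuous into any
topology, since the preimage of any set is the union of the basic open cones `N_{x↾U}` of its
points; so `Φ = θ ∘ U.domRestrict` is `I`-continuous and every `Φ`-preimage is `I`-clopen.
Precomposing `Φ` with a retraction of `ν^κ` onto `A` gives (1). Restricting `Φ` to those
`x ∈ Φ⁻¹(A)` that are constant off `U` gives (2); the constancy condition is `I`-closed because
singletons lie in `I`.
-/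

open Set Cardinal TopologicalSpace

open Topology

namespace IsGoodIdeal

variable {κ : Type} [LinearOrder κ] {I : Set (Set κ)}

lemma union_mem (hI : IsGoodIdeal κ I) (hκ : ℵ₀ ≤ #κ) {A B : Set κ} (hA : A ∈ I)
    (hB : B ∈ I) : A ∪ B ∈ I := by
  have hcard : #({A, B} : Set (Set κ)) < #κ := (toFinite _).lt_aleph0.trans_le hκ
  simpa only [sUnion_pair] using
    hI.complete {A, B} (by rintro S (rfl | rfl) <;> assumption) hcard

/-- If `a` were the maximum, an unbounded `U ∈ I` would contain `a`, and `{a}ᶜ` is bounded. -/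
lemma noMaxOrder (hI : IsGoodIdeal κ I) (hκ : ℵ₀ ≤ #κ) {U : Set κ} (hUI : U ∈ I)
    (hU : ¬ Bounded (· < ·) U) : NoMaxOrder κ := by
  refine ⟨fun a => ?_⟩
  by_contra! hmax
  have hlt : ∀ b ≠ a, b < a := fun b hb => (hmax b).lt_of_ne hb
  have haU : a ∈ U := by
    by_contra haU
    exact hU ⟨a, fun b hb => hlt b (ne_of_mem_of_not_mem hb haU)⟩
  have hsingleton : {a} ∈ I := hI.lower (singleton_subset_iff.mpr haU) hUI
  have hcompl : {a}ᶜ ∈ I := hI.bounded_mem _ ⟨a, hlt⟩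
  exact hI.proper (by simpa using hI.union_mem hκ hsingleton hcompl)

variable [NoMaxOrder κ]

lemma Iic_mem (hI : IsGoodIdeal κ I) (a : κ) : Iic a ∈ I := by
  obtain ⟨b, hab⟩ := exists_gt a
  exact hI.bounded_mem _ ⟨b, fun _ hx => lt_of_le_of_lt hx hab⟩

lemma singleton_mem (hI : IsGoodIdeal κ I) (a : κ) : {a} ∈ I :=
  hI.lower (singleton_subset_iff.mpr self_mem_Iic) (hI.Iic_mem a)

/-- Otherwise `univ` would be the union of fewer than `#κ` sets `Iic u`, `u ∈ U`. -/
lemma mk_eq_of_not_bounded (hI : IsGoodIdeal κ I) {U : Set κ} (hU : ¬ Bounded (· < ·) U) :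
    #U = #κ := by
  refine (mk_set_le U).antisymm (not_lt.mp fun hlt => hI.proper ?_)
  have hcover : ⋃₀ (Iic '' U) = Set.univ := by
    refine eq_univ_of_forall fun a => ?_
    by_contra! ha
    refine hU ⟨a, fun u hu => not_le.mp fun hau => ha ⟨Iic u, mem_image_of_mem _ hu, hau⟩⟩
  rw [← hcover]
  exact hI.complete _ (image_subset_iff.mpr fun u _ => hI.Iic_mem u)
    (mk_image_le.trans_lt hlt)

end IsGoodIdeal

section IdealTopology

variable {κ α β : Type} {I : Set (Set κ)}

lemma isOpen_cone {D : Set κ} (hD : D ∈ I) (f : κ → α) : IsOpen[idealTop I α] (cone D f) :=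
  isOpen_generateFrom_of_mem ⟨D, hD, f, rfl⟩

lemma continuous_idealTop_comp_domRestrict {U : Set κ} (hU : U ∈ I) (g : (U → α) → β)
    (t : TopologicalSpace β) : Continuous[idealTop I α, t] (g ∘ U.domRestrict) := by
  refine @continuous_def _ _ (idealTop I α) t _ |>.mpr fun s _ => ?_
  have hcover :
      g ∘ U.domRestrict ⁻¹' s = ⋃ x ∈ g ∘ U.domRestrict ⁻¹' s, cone U x := by
    refine subset_antisymm
      (fun y hy => mem_biUnion hy (show y ∈ cone U y from fun _ _ => rfl)) ?_
    simp only [iUnion_subset_iff]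
    intro x hx y hy
    have : U.domRestrict y = U.domRestrict x := funext fun a => hy a a.2
    simpa [mem_preimage, Function.comp_apply, this] using hx
  rw [hcover]
  exact @isOpen_biUnion _ _ (idealTop I α) _ _ fun x _ => isOpen_cone hU x

lemma isClosed_preimage_comp_domRestrict {U : Set κ} (hU : U ∈ I) (g : (U → α) → β)
    (s : Set β) : IsClosed[idealTop I α] (g ∘ U.domRestrict ⁻¹' s) :=
  @IsClosed.preimage _ _ (idealTop I α) ⊥ _ (continuous_idealTop_comp_domRestrict hU g ⊥) _
    (@isClosed_discrete _ ⊥ (discreteTopology_bot β) s)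

lemma isClosed_setOf_eq_off [LinearOrder κ] [NoMaxOrder κ] (hI : IsGoodIdeal κ I)
    (U : Set κ) (c : α) : IsClosed[idealTop I α] {x | ∀ a ∉ U, x a = c} := by
  let _ := idealTop I α
  simp only [ofPred_forall]
  exact isClosed_iInter fun a => isClosed_iInter fun _ =>
    isClosed_preimage_comp_domRestrict (hI.singleton_mem a) (fun y => y ⟨a, rfl⟩) {c}

end IdealTopology

lemma exists_domRestrict_eq_and_eq_off {κ α : Type} {U : Set κ} (f : U → α) (c : α) :
    ∃ x : κ → α, U.domRestrict x = f ∧ ∀ a ∉ U, x a = c := by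
  classical
  exact ⟨fun a => if h : a ∈ U then f ⟨a, h⟩ else c, funext fun a => dif_pos a.2,
    fun a ha => dif_neg ha⟩

lemma injOn_domRestrict_setOf_eq_off {κ α : Type} (U : Set κ) (c : α) :
    InjOn U.domRestrict {x : κ → α | ∀ a ∉ U, x a = c} := by
  intro x hx y hy hxy
  funext a
  by_cases ha : a ∈ U
  · exact congrFun hxy ⟨a, ha⟩
  · rw [hx a ha, hy a ha]

theorem stmt_17_general (κ ν : Type) [LinearOrder κ]
    (hunc : ℵ₀ < #κ) (hν : #ν = 2 ∨ #ν = #κ)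
    (I : Set (Set κ)) (hI : IsGoodIdeal κ I)
    (hU : ∃ U ∈ I, ¬ Set.Bounded (· < ·) U) :
    (∀ A : Set (κ → ν), A.Nonempty →
      ∃ Φ : (κ → κ) → (κ → ν),
        @Continuous _ _ (idealTop I κ) (idealTop I ν) Φ ∧ Φ '' Set.univ = A) ∧
    (∀ A : Set (κ → ν),
      ∃ (C : Set (κ → κ)) (Φ : (κ → κ) → (κ → ν)),
        @IsClosed _ (idealTop I κ) C ∧
        @Continuous _ _ (idealTop I κ) (idealTop I ν) Φ ∧
        Set.InjOn Φ C ∧ Φ '' C = A) := by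
  classical
  obtain ⟨U, hUI, hUunb⟩ := hU
  have := hI.noMaxOrder hunc.le hUI hUunb
  obtain ⟨c⟩ : Nonempty κ := mk_ne_zero_iff.mp (aleph0_pos.trans hunc).ne'
  have hcard : #(U → κ) = #(κ → ν) := by
    rw [← power_def, ← power_def, hI.mk_eq_of_not_bounded hUunb]
    rcases hν with h | h <;> rw [h, power_self_eq hunc.le]
  obtain ⟨θ⟩ := Cardinal.eq.mp hcard
  have hrestrict : Function.Surjective (U.domRestrict : (κ → κ) → U → κ) := fun f =>
    (exists_domRestrict_eq_and_eq_off f c).imp fun _ => And.left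
  refine ⟨fun A ⟨a₀, ha₀⟩ => ?_, fun A => ?_⟩
  · let retract : (κ → ν) → (κ → ν) := fun y => if y ∈ A then y else a₀
    refine ⟨retract ∘ θ ∘ U.domRestrict,
      continuous_idealTop_comp_domRestrict hUI (retract ∘ θ) _, ?_⟩
    rw [image_univ, (θ.surjective.comp hrestrict).range_comp]
    refine (range_subset_iff.mpr fun y => ?_).antisymm fun y hy => ⟨y, if_pos hy⟩
    by_cases hy : y ∈ A <;> simp [retract, hy, ha₀]
  · refine ⟨{x | ∀ a ∉ U, x a = c} ∩ (θ ∘ U.domRestrict) ⁻¹' A, θ ∘ U.domRestrict,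
      ?_, continuous_idealTop_comp_domRestrict hUI θ _, ?_, ?_⟩
    · let _ := idealTop I κ
      exact (isClosed_setOf_eq_off hI U c).inter
        (isClosed_preimage_comp_domRestrict hUI θ A)
    · exact θ.injective.comp_injOn ((injOn_domRestrict_setOf_eq_off U c).mono inter_subset_left)
    · refine (image_subset_iff.mpr inter_subset_right).antisymm fun y hy => ?_
      obtain ⟨x, hxU, hxc⟩ := exists_domRestrict_eq_and_eq_off (θ.symm y) c
      have hΦx : θ (U.domRestrict x) = y := by rw [hxU, θ.apply_symm_apply]
      exact ⟨x, ⟨hxc, show θ (U.domRestrict x) ∈ A from hΦx ▸ hy⟩, hΦx⟩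

/-- if `I` contains an unbounded set, every nonempty `A ⊆ ν^κ` is an
`I`-continuous image of `κ^κ`, and every `A ⊆ ν^κ` is an injective `I`-continuous image
of an `I`-closed subset of `κ^κ`. -/
theorem stmt_17 (κ ν : Type) [LinearOrder κ]
    (hreg : (#κ).IsRegular) (hunc : ℵ₀ < #κ) (hν : #ν = 2 ∨ #ν = #κ)
    (I : Set (Set κ)) (hI : IsGoodIdeal κ I)
    (hU : ∃ U ∈ I, ¬ Set.Bounded (· < ·) U) :
    (∀ A : Set (κ → ν), A.Nonempty →
      ∃ Φ : (κ → κ) → (κ → ν),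
        @Continuous _ _ (idealTop I κ) (idealTop I ν) Φ ∧ Φ '' Set.univ = A) ∧
    (∀ A : Set (κ → ν),
      ∃ (C : Set (κ → κ)) (Φ : (κ → κ) → (κ → ν)),
        @IsClosed _ (idealTop I κ) C ∧
        @Continuous _ _ (idealTop I κ) (idealTop I ν) Φ ∧
        Set.InjOn Φ C ∧ Φ '' C = A) :=
  stmt_17_general κ ν hunc hν I hI hU
end
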